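/- arXiv:2103.04358 — 2 statements merged into one kernel-verified Lean document; each statement's English description precedes it below -/
import Mathlib

section
/- Let 0 < s ≤ 3/2 and a ∈ ℝ. There is a constant C_s > 0, independent of a and of I, J, K, such that for all integers I, J, K ≥ 1, |S_{Π_{I,J,K}}(a,s) - E_{Π_{I,J,K}}(a,s)| ≤ C_s / (a² + min{I², J², K²})^s. -/
open scoped BigOperators

/-- `S_{Π_{I,J,K}}(a,s)`: the alternating lattice sum over the nonzero integer points of the
rectangle `Π_{I,J,K} = [-I,I] × [-J,J] × [-K,K]`. -/
noncomputable def Spi (a s : ℝ) (I J K : ℕ) : ℝ :=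
  ∑ p ∈ ((Finset.Icc (-(I : ℤ)) (I : ℤ)) ×ˢ (Finset.Icc (-(J : ℤ)) (J : ℤ)) ×ˢ
      (Finset.Icc (-(K : ℤ)) (K : ℤ))).filter (fun p : ℤ × ℤ × ℤ => p ≠ 0),
    (-1 : ℝ) ^ (p.1 + p.2.1 + p.2.2) *
      (a ^ 2 + (p.1 : ℝ) ^ 2 + (p.2.1 : ℝ) ^ 2 + (p.2.2 : ℝ) ^ 2) ^ (-s)

/-- `E'_{I,J,K}(a,s)`: the alternating block sum over the 8 corners of the cube
`Q_{2I,2J,2K}`, with the term at the origin omitted. -/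
noncomputable def Eblock (a s : ℝ) (I J K : ℤ) : ℝ :=
  ∑ i ∈ Finset.Icc (2 * I) (2 * I + 1), ∑ j ∈ Finset.Icc (2 * J) (2 * J + 1),
    ∑ k ∈ Finset.Icc (2 * K) (2 * K + 1),
      if (i, j, k) = ((0 : ℤ), (0 : ℤ), (0 : ℤ)) then 0
      else (-1 : ℝ) ^ (i + j + k) *
        (a ^ 2 + (i : ℝ) ^ 2 + (j : ℝ) ^ 2 + (k : ℝ) ^ 2) ^ (-s)

/-- `E_{Π_{I,J,K}}(a,s)`: the sum of the block sums `E'_{i,j,k}(a,s)` over all `(i,j,k) ∈ ℤ³`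
with `(2i,2j,2k) ∈ Π_{I,J,K}`. -/
noncomputable def EPi (a s : ℝ) (I J K : ℕ) : ℝ :=
  ∑ p ∈ ((Finset.Icc (-(I : ℤ)) (I : ℤ)) ×ˢ (Finset.Icc (-(J : ℤ)) (J : ℤ)) ×ˢ
      (Finset.Icc (-(K : ℤ)) (K : ℤ))).filter (fun p : ℤ × ℤ × ℤ =>
        -(I : ℤ) ≤ 2 * p.1 ∧ 2 * p.1 ≤ (I : ℤ) ∧ -(J : ℤ) ≤ 2 * p.2.1 ∧ 2 * p.2.1 ≤ (J : ℤ) ∧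
          -(K : ℤ) ≤ 2 * p.2.2 ∧ 2 * p.2.2 ≤ (K : ℤ)),
    Eblock a s p.1 p.2.1 p.2.2


/-!
The blocks `{2i, 2i + 1}` with `|2i| ≤ n` cover `[-n, n]` up to a single point `e` with
`|e| ≥ n`: the point `n + 1` is added when `n` is even and `-n` is missing when `n` is odd.
Hence `S - E` is a signed sum of three planar slabs, each an alternating sum of
`(a² + e² + x² + y²)^(-s)` over a rectangle. After reflecting, a rectangle splits into four
quadrant rectangles. On a quadrant the function is nonnegative, decreasing in each variable and
has decreasing mixed differences (convexity of `t ↦ t^(-s)`), so applying the alternating series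
estimate once in each variable bounds the quadrant sum by its corner value `(a² + e²)^(-s)`.
Altogether `C = 3 · 4 = 12` works.
-/

open Finset

theorem neg_one_zpow_mul_neg_one_zpow_self (n : ℤ) : (-1 : ℝ) ^ n * (-1) ^ n = 1 := by
  rw [← mul_zpow]; norm_num

theorem neg_one_zpow_neg (n : ℤ) : (-1 : ℝ) ^ (-n) = (-1) ^ n := by
  rw [zpow_neg, ← inv_zpow, inv_neg_one]

theorem neg_one_zpow_mul_sum_Icc_mem_Icc {h : ℤ → ℝ} (p q : ℤ)
    (h0 : ∀ x, p ≤ x → 0 ≤ h x) (hanti : ∀ x, p ≤ x → h (x + 1) ≤ h x) :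
    (-1) ^ p * ∑ x ∈ Icc p q, (-1) ^ x * h x ∈ Set.Icc 0 (h p) := by
  rcases lt_or_ge (q + 1) p with hqp | hpq
  · simpa [Icc_eq_empty_of_lt (by omega : q < p)] using h0 p le_rfl
  induction p, hpq using Int.leInductionDown with
  | base => simpa using h0 (q + 1) le_rfl
  | pred p hp ih =>
    obtain ⟨ih₀, ih₁⟩ := ih (fun x hx => h0 x (by omega)) (fun x hx => hanti x (by omega))
    have hstep := hanti (p - 1) le_rfl
    rw [sub_add_cancel] at hstep
    rw [← insert_Icc_add_one_left_eq_Icc (by omega), sub_add_cancel,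
      sum_insert (by simp), mul_add, ← mul_assoc, neg_one_zpow_mul_neg_one_zpow_self, one_mul,
      zpow_sub₀ (by norm_num), zpow_one]
    constructor <;> nlinarith [h0 p (by omega)]

theorem abs_sum_Icc_neg_one_zpow_mul_le {h : ℤ → ℝ} (p q : ℤ)
    (h0 : ∀ x, p ≤ x → 0 ≤ h x) (hanti : ∀ x, p ≤ x → h (x + 1) ≤ h x) :
    |∑ x ∈ Icc p q, (-1) ^ x * h x| ≤ h p := by
  obtain ⟨hlo, hhi⟩ := neg_one_zpow_mul_sum_Icc_mem_Icc p q h0 hanti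
  calc |∑ x ∈ Icc p q, (-1) ^ x * h x| = |(-1) ^ p * ∑ x ∈ Icc p q, (-1) ^ x * h x| := by
        rw [abs_mul, abs_neg_one_zpow, one_mul]
    _ ≤ h p := abs_le.mpr ⟨by linarith [h0 p le_rfl], hhi⟩

theorem abs_sum_Icc_sum_Icc_neg_one_zpow_mul_le {φ : ℤ → ℤ → ℝ} (p q r t : ℤ)
    (h0 : ∀ x y, p ≤ x → r ≤ y → 0 ≤ φ x y)
    (hanti_fst : ∀ x y, p ≤ x → r ≤ y → φ (x + 1) y ≤ φ x y)
    (hanti_snd : ∀ x y, p ≤ x → r ≤ y → φ x (y + 1) ≤ φ x y)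
    (hmixed : ∀ x y, p ≤ x → r ≤ y → φ (x + 1) y - φ (x + 1) (y + 1) ≤ φ x y - φ x (y + 1)) :
    |∑ x ∈ Icc p q, ∑ y ∈ Icc r t, (-1) ^ (x + y) * φ x y| ≤ φ p r := by
  set ψ : ℤ → ℝ := fun x => (-1) ^ r * ∑ y ∈ Icc r t, (-1) ^ y * φ x y with hψ
  have hψ_mem (x : ℤ) (hx : p ≤ x) : ψ x ∈ Set.Icc 0 (φ x r) :=
    neg_one_zpow_mul_sum_Icc_mem_Icc r t (h0 x · hx) (hanti_snd x · hx)
  -- the differences `φ x y - φ (x + 1) y` are again nonnegative and antitone in `y`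
  have hψ_anti (x : ℤ) (hx : p ≤ x) : ψ (x + 1) ≤ ψ x := by
    have := (neg_one_zpow_mul_sum_Icc_mem_Icc (h := fun y => φ x y - φ (x + 1) y) r t
      (fun y hy => sub_nonneg.mpr (hanti_fst x y hx hy))
      (fun y hy => by linarith [hmixed x y hx hy])).1
    simp only [mul_sub, sum_sub_distrib] at this
    simpa [hψ] using this
  have hsum : ∑ x ∈ Icc p q, ∑ y ∈ Icc r t, (-1) ^ (x + y) * φ x y
      = (-1) ^ r * ∑ x ∈ Icc p q, (-1) ^ x * ψ x := by
    simp only [hψ, mul_sum]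
    refine sum_congr rfl fun x _ => sum_congr rfl fun y _ => ?_
    rw [zpow_add₀ (by norm_num)]
    linear_combination -(-1 : ℝ) ^ x * (-1) ^ y * φ x y * neg_one_zpow_mul_neg_one_zpow_self r
  rw [hsum, abs_mul, abs_neg_one_zpow, one_mul]
  exact (abs_sum_Icc_neg_one_zpow_mul_le p q (fun x hx => (hψ_mem x hx).1) hψ_anti).trans
    (hψ_mem p le_rfl).2

theorem rpow_neg_add_add_sub_rpow_neg_add_add_le {c u u' v v' s : ℝ} (hc : 0 < c) (hu : 0 ≤ u)
    (huu' : u ≤ u') (hv : 0 ≤ v) (hvv' : v ≤ v') (hs : 0 ≤ s) :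
    (c + u' + v) ^ (-s) - (c + u' + v') ^ (-s) ≤ (c + u + v) ^ (-s) - (c + u + v') ^ (-s) := by
  set f : ℝ → ℝ := fun w => (c + u + w) ^ (-s) - (c + u' + w) ^ (-s)
  have hf' (w : ℝ) (hw : 0 ≤ w) :
      HasDerivAt f (-s * (c + u + w) ^ (-s - 1) - -s * (c + u' + w) ^ (-s - 1)) w := by
    have hC {C : ℝ} (hC : c + u ≤ C) :
        HasDerivAt (fun w => (C + w) ^ (-s)) (-s * (C + w) ^ (-s - 1)) w := by
      simpa using ((hasDerivAt_id w).const_add C).rpow_const (p := -s)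
        (Or.inl (by simp only [id]; linarith))
    exact (hC le_rfl).sub (hC (by linarith))
  have hanti : AntitoneOn f (Set.Ici 0) := by
    refine antitoneOn_of_hasDerivWithinAt_nonpos (convex_Ici 0)
      (fun w hw => (hf' w hw).continuousAt.continuousWithinAt)
      (fun w hw => (hf' w (interior_subset hw)).hasDerivWithinAt) (fun w hw => ?_)
    rw [interior_Ici] at hw
    have : (c + u' + w) ^ (-s - 1) ≤ (c + u + w) ^ (-s - 1) :=
      Real.rpow_le_rpow_of_nonpos (by linarith [hw.out]) (by linarith) (by linarith)
    nlinarith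
  have := hanti (Set.mem_Ici.mpr hv) (Set.mem_Ici.mpr (hv.trans hvv')) hvv'
  simp only [f] at this
  linarith

theorem abs_sum_Icc_sum_Icc_neg_one_zpow_mul_rpow_le {c s : ℝ} (hc : 0 < c) (hs : 0 ≤ s)
    (p q r t : ℤ) (hp : 0 ≤ p) (hr : 0 ≤ r) :
    |∑ x ∈ Icc p q, ∑ y ∈ Icc r t, (-1) ^ (x + y) * (c + (x : ℝ) ^ 2 + (y : ℝ) ^ 2) ^ (-s)|
      ≤ c ^ (-s) := by
  have hbase (x y : ℤ) : 0 < c + (x : ℝ) ^ 2 + (y : ℝ) ^ 2 := by positivity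
  have hsq {x x' : ℤ} (hx : x ≤ x') (hx0 : 0 ≤ x) : (x : ℝ) ^ 2 ≤ (x' : ℝ) ^ 2 := by
    gcongr
  have hanti {x x' y y' : ℤ} (hx : x ≤ x') (hx0 : 0 ≤ x) (hy : y ≤ y') (hy0 : 0 ≤ y) :
      (c + (x' : ℝ) ^ 2 + (y' : ℝ) ^ 2) ^ (-s) ≤ (c + (x : ℝ) ^ 2 + (y : ℝ) ^ 2) ^ (-s) :=
    Real.rpow_le_rpow_of_nonpos (hbase x y) (by linarith [hsq hx hx0, hsq hy hy0]) (by linarith)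
  have hφ := abs_sum_Icc_sum_Icc_neg_one_zpow_mul_le
    (φ := fun x y : ℤ => (c + (x : ℝ) ^ 2 + (y : ℝ) ^ 2) ^ (-s)) p q r t
    (fun x y _ _ => (Real.rpow_pos_of_pos (hbase x y) _).le)
    (fun x y hx hy => hanti (by omega) (by omega) le_rfl (by omega))
    (fun x y hx hy => hanti le_rfl (by omega) (by omega) (by omega))
    (fun x y hx hy => rpow_neg_add_add_sub_rpow_neg_add_add_le hc (by positivity)
      (hsq (by omega) (by omega)) (by positivity) (hsq (by omega) (by omega)) hs)
  calc _ ≤ (c + (p : ℝ) ^ 2 + (r : ℝ) ^ 2) ^ (-s) := hφ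
    _ ≤ (c + ((0 : ℤ) : ℝ) ^ 2 + ((0 : ℤ) : ℝ) ^ 2) ^ (-s) := hanti hp le_rfl hr le_rfl
    _ = c ^ (-s) := by simp

theorem exists_sum_Icc_eq_add_of_even (u v : ℤ) :
    ∃ p q p' q' : ℤ, 0 ≤ p ∧ 0 ≤ p' ∧ ∀ {M : Type*} [AddCommMonoid M] (F : ℤ → M),
      (∀ x, F (-x) = F x) → ∑ x ∈ Icc u v, F x = ∑ x ∈ Icc p q, F x + ∑ x ∈ Icc p' q', F x := by
  refine ⟨max (-v) 1, -u, max u 0, v, by omega, by omega, fun F hF => ?_⟩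
  have hsplit : Icc u v = Icc u (min v (-1)) ∪ Icc (max u 0) v := by
    ext x; simp only [mem_union, mem_Icc]; omega
  have hdisj : Disjoint (Icc u (min v (-1))) (Icc (max u 0) v) := by
    rw [disjoint_left]; intro x; simp only [mem_Icc]; omega
  rw [hsplit, sum_union hdisj]
  congr 1
  exact sum_nbij' (- ·) (- ·) (by simp; omega) (by simp; omega) (by simp) (by simp)
    fun x _ => (hF x).symm

theorem abs_sum_Icc_sum_Icc_le_of_even {g : ℤ → ℤ → ℝ} {B : ℝ}
    (heven_fst : ∀ x y, g (-x) y = g x y) (heven_snd : ∀ x y, g x (-y) = g x y)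
    (hquadrant : ∀ p q r t, 0 ≤ p → 0 ≤ r → |∑ x ∈ Icc p q, ∑ y ∈ Icc r t, g x y| ≤ B)
    (u v w z : ℤ) : |∑ x ∈ Icc u v, ∑ y ∈ Icc w z, g x y| ≤ 4 * B := by
  obtain ⟨p, q, p', q', hp, hp', hx⟩ := exists_sum_Icc_eq_add_of_even u v
  obtain ⟨r, t, r', t', hr, hr', hy⟩ := exists_sum_Icc_eq_add_of_even w z
  have hy' (x : ℤ) := hy (g x) (heven_snd x)
  rw [hx _ fun x => by simp only [heven_fst]]
  simp only [hy', sum_add_distrib]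
  have := hquadrant p q r t hp hr
  have := hquadrant p q r' t' hp hr'
  have := hquadrant p' q' r t hp' hr
  have := hquadrant p' q' r' t' hp' hr'
  refine ((abs_add_le _ _).trans (add_le_add (abs_add_le _ _) (abs_add_le _ _))).trans ?_
  linarith

theorem abs_sum_Icc_sum_Icc_neg_one_zpow_mul_rpow_le_four_mul {c s : ℝ} (hc : 0 < c) (hs : 0 ≤ s)
    (u v w z : ℤ) :
    |∑ x ∈ Icc u v, ∑ y ∈ Icc w z, (-1) ^ (x + y) * (c + (x : ℝ) ^ 2 + (y : ℝ) ^ 2) ^ (-s)|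
      ≤ 4 * c ^ (-s) :=
  abs_sum_Icc_sum_Icc_le_of_even
    (fun x y => by
      simp only [zpow_add₀ (by norm_num : (-1 : ℝ) ≠ 0), neg_one_zpow_neg, Int.cast_neg, neg_sq])
    (fun x y => by
      simp only [zpow_add₀ (by norm_num : (-1 : ℝ) ≠ 0), neg_one_zpow_neg, Int.cast_neg, neg_sq])
    (abs_sum_Icc_sum_Icc_neg_one_zpow_mul_rpow_le hc hs) u v w z

theorem sum_sum_sum_sub_sum_sum_sum {ι : Type*} {A₁ A₂ A₃ B₁ B₂ B₃ : Finset ι} {ε₁ ε₂ ε₃ : ℝ}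
    {e₁ e₂ e₃ : ι} (h₁ : ∀ h : ι → ℝ, ∑ x ∈ A₁, h x - ∑ x ∈ B₁, h x = ε₁ * h e₁)
    (h₂ : ∀ h : ι → ℝ, ∑ x ∈ A₂, h x - ∑ x ∈ B₂, h x = ε₂ * h e₂)
    (h₃ : ∀ h : ι → ℝ, ∑ x ∈ A₃, h x - ∑ x ∈ B₃, h x = ε₃ * h e₃) (f : ι → ι → ι → ℝ) :
    ∑ x ∈ A₁, ∑ y ∈ A₂, ∑ z ∈ A₃, f x y z - ∑ x ∈ B₁, ∑ y ∈ B₂, ∑ z ∈ B₃, f x y z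
      = ε₁ * ∑ y ∈ A₂, ∑ z ∈ A₃, f e₁ y z + ε₂ * ∑ x ∈ B₁, ∑ z ∈ A₃, f x e₂ z
        + ε₃ * ∑ x ∈ B₁, ∑ y ∈ B₂, f x y e₃ := by
  have h₂₃ (x : ι) : ∑ y ∈ A₂, ∑ z ∈ A₃, f x y z - ∑ y ∈ B₂, ∑ z ∈ B₃, f x y z
      = ε₂ * ∑ z ∈ A₃, f x e₂ z + ε₃ * ∑ y ∈ B₂, f x y e₃ := by
    rw [← h₂ fun y => ∑ z ∈ A₃, f x y z, mul_sum, ← sum_congr rfl fun y _ => h₃ (f x y),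
      sum_sub_distrib]
    ring
  rw [← h₁ fun x => ∑ y ∈ A₂, ∑ z ∈ A₃, f x y z, mul_sum B₁ _ ε₂, mul_sum B₁ _ ε₃, add_assoc,
    ← sum_add_distrib, ← sum_congr rfl fun x _ => h₂₃ x, sum_sub_distrib]
  ring

noncomputable def latticeTerm (a s : ℝ) (x y z : ℤ) : ℝ :=
  if (x, y, z) = ((0 : ℤ), (0 : ℤ), (0 : ℤ)) then 0
  else (-1 : ℝ) ^ (x + y + z) * (a ^ 2 + (x : ℝ) ^ 2 + (y : ℝ) ^ 2 + (z : ℝ) ^ 2) ^ (-s)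

theorem latticeTerm_comm (a s : ℝ) (x y z : ℤ) :
    latticeTerm a s x y z = latticeTerm a s y x z := by
  simp only [latticeTerm, Prod.mk.injEq, and_left_comm (a := x = 0)]
  ring_nf

theorem latticeTerm_right_comm (a s : ℝ) (x y z : ℤ) :
    latticeTerm a s x y z = latticeTerm a s x z y := by
  simp only [latticeTerm, Prod.mk.injEq, and_comm (a := y = 0)]
  ring_nf

theorem latticeTerm_of_ne_zero (a s : ℝ) {e : ℤ} (he : e ≠ 0) (x y : ℤ) :
    latticeTerm a s e x y
      = (-1) ^ e * ((-1) ^ (x + y) * (a ^ 2 + (e : ℝ) ^ 2 + (x : ℝ) ^ 2 + (y : ℝ) ^ 2) ^ (-s)) := by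
  rw [latticeTerm, if_neg (by simp [he]), add_assoc e, zpow_add₀ (by norm_num)]
  ring_nf

theorem abs_sum_Icc_sum_Icc_latticeTerm_le (a : ℝ) {s : ℝ} (hs : 0 ≤ s) {e : ℤ} (he : e ≠ 0)
    (u v w z : ℤ) :
    |∑ x ∈ Icc u v, ∑ y ∈ Icc w z, latticeTerm a s e x y| ≤ 4 * (a ^ 2 + (e : ℝ) ^ 2) ^ (-s) := by
  simp only [latticeTerm_of_ne_zero a s he, ← mul_sum, abs_mul, abs_neg_one_zpow, one_mul]
  exact abs_sum_Icc_sum_Icc_neg_one_zpow_mul_rpow_le_four_mul (by positivity) hs u v w z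

theorem Spi_eq_sum_latticeTerm (a s : ℝ) (I J K : ℕ) :
    Spi a s I J K = ∑ x ∈ Icc (-(I : ℤ)) I, ∑ y ∈ Icc (-(J : ℤ)) J, ∑ z ∈ Icc (-(K : ℤ)) K,
      latticeTerm a s x y z := by
  simp only [Spi, sum_filter, sum_product, latticeTerm, ite_not]
  rfl

/-- `⋃ {2i, 2i + 1}` over `|2i| ≤ n`: the coordinates covered by the blocks of `EPi`. -/
noncomputable def blockIcc (n : ℤ) : Finset ℤ := Icc (2 * -(n / 2)) (2 * (n / 2) + 1)

theorem exists_sum_Icc_sub_sum_blockIcc (n : ℕ) :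
    ∃ (ε : ℝ) (e : ℤ), |ε| = 1 ∧ e ≠ 0 ∧ (n : ℝ) ^ 2 ≤ (e : ℝ) ^ 2 ∧ ∀ h : ℤ → ℝ,
      ∑ x ∈ Icc (-(n : ℤ)) n, h x - ∑ x ∈ blockIcc n, h x = ε * h e := by
  rcases Nat.even_or_odd n with ⟨k, hk⟩ | ⟨k, hk⟩
  · refine ⟨-1, n + 1, by simp, by omega, by push_cast; nlinarith [(n.cast_nonneg : (0 : ℝ) ≤ n)],
      fun h => ?_⟩
    have : blockIcc n = insert ((n : ℤ) + 1) (Icc (-(n : ℤ)) n) := by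
      ext x; simp only [blockIcc, mem_Icc, mem_insert]; omega
    rw [this, sum_insert (by simp)]
    ring
  · refine ⟨1, -n, by simp, by omega, by simp, fun h => ?_⟩
    have : Icc (-(n : ℤ)) n = insert (-(n : ℤ)) (blockIcc n) := by
      ext x; simp only [blockIcc, mem_Icc, mem_insert]; omega
    rw [this, sum_insert (by simp only [blockIcc, mem_Icc]; omega)]
    ring

theorem EPi_eq_sum_latticeTerm (a s : ℝ) (I J K : ℕ) :
    EPi a s I J K = ∑ x ∈ blockIcc I, ∑ y ∈ blockIcc J, ∑ z ∈ blockIcc K,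
      latticeTerm a s x y z := by
  let block (i : ℤ) : Finset ℤ := Icc (2 * i) (2 * i + 1)
  have hEblock (i j k : ℤ) : Eblock a s i j k
      = ∑ q ∈ block i ×ˢ block j ×ˢ block k, latticeTerm a s q.1 q.2.1 q.2.2 := by
    simp only [sum_product]; rfl
  have hprod : ∑ x ∈ blockIcc I, ∑ y ∈ blockIcc J, ∑ z ∈ blockIcc K, latticeTerm a s x y z
      = ∑ q ∈ blockIcc I ×ˢ blockIcc J ×ˢ blockIcc K, latticeTerm a s q.1 q.2.1 q.2.2 := by
    simp only [sum_product]
  rw [EPi, hprod]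
  simp only [hEblock]
  rw [sum_sigma']
  refine sum_nbij' (fun r => r.2) (fun q => ⟨(q.1 / 2, q.2.1 / 2, q.2.2 / 2), q⟩) ?_ ?_ ?_ ?_ ?_ <;>
    simp only [Sigma.forall, Prod.forall, mem_sigma, mem_filter, mem_product, mem_Icc, blockIcc,
      block, Sigma.mk.injEq, Prod.mk.injEq, heq_eq_eq, and_true, implies_true] <;>
    omega

theorem abs_Spi_sub_EPi_le_general (s : ℝ) (hs0 : 0 < s) :
    ∃ C > 0, ∀ (a : ℝ) (I J K : ℕ), 1 ≤ I → 1 ≤ J → 1 ≤ K →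
      |Spi a s I J K - EPi a s I J K| ≤
        C / (a ^ 2 + min (min ((I : ℝ) ^ 2) ((J : ℝ) ^ 2)) ((K : ℝ) ^ 2)) ^ s := by
  refine ⟨12, by norm_num, fun a I J K hI hJ hK => ?_⟩
  set m := min (min ((I : ℝ) ^ 2) ((J : ℝ) ^ 2)) ((K : ℝ) ^ 2)
  have hm : 0 < a ^ 2 + m := by
    have : (1 : ℝ) ≤ m := by simp only [m, le_min_iff, one_le_sq_iff_one_le_abs]; norm_cast
    positivity
  have slab {n : ℕ} {e : ℤ} (he : e ≠ 0) (hne : (n : ℝ) ^ 2 ≤ (e : ℝ) ^ 2) (hmn : m ≤ (n : ℝ) ^ 2)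
      {u v w z : ℤ} :
      |∑ x ∈ Icc u v, ∑ y ∈ Icc w z, latticeTerm a s e x y| ≤ 4 * (a ^ 2 + m) ^ (-s) := by
    refine (abs_sum_Icc_sum_Icc_latticeTerm_le a hs0.le he u v w z).trans ?_
    gcongr 4 * ?_
    exact Real.rpow_le_rpow_of_nonpos hm (by linarith) (by linarith)
  obtain ⟨ε₁, e₁, hε₁, he₁, hIe₁, hd₁⟩ := exists_sum_Icc_sub_sum_blockIcc I
  obtain ⟨ε₂, e₂, hε₂, he₂, hJe₂, hd₂⟩ := exists_sum_Icc_sub_sum_blockIcc J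
  obtain ⟨ε₃, e₃, hε₃, he₃, hKe₃, hd₃⟩ := exists_sum_Icc_sub_sum_blockIcc K
  rw [Spi_eq_sum_latticeTerm, EPi_eq_sum_latticeTerm, sum_sum_sum_sub_sum_sum_sum hd₁ hd₂ hd₃]
  simp only [latticeTerm_comm _ _ _ e₂, latticeTerm_right_comm _ _ _ _ e₃,
    latticeTerm_comm _ _ _ e₃]
  refine (abs_add_three _ _ _).trans ?_
  rw [abs_mul, abs_mul, abs_mul, hε₁, hε₂, hε₃]
  calc _ ≤ 4 * (a ^ 2 + m) ^ (-s) + 4 * (a ^ 2 + m) ^ (-s) + 4 * (a ^ 2 + m) ^ (-s) := by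
        simp only [one_mul]
        gcongr ?_ + ?_ + ?_
        exacts [slab he₁ hIe₁ ((min_le_left _ _).trans (min_le_left _ _)),
          slab he₂ hJe₂ ((min_le_left _ _).trans (min_le_right _ _)),
          slab he₃ hKe₃ (min_le_right _ _)]
    _ = 12 / (a ^ 2 + m) ^ s := by rw [Real.rpow_neg hm.le]; ring

/-- For `0 < s ≤ 3/2` there is `C_s > 0`, independent of `a` and `I, J, K`, such that
`|S_{Π_{I,J,K}}(a,s) - E_{Π_{I,J,K}}(a,s)| ≤ C_s/(a² + min{I²,J²,K²})^s`. -/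
theorem abs_Spi_sub_EPi_le (s : ℝ) (hs0 : 0 < s) (hs : s ≤ 3 / 2) :
    ∃ C > 0, ∀ (a : ℝ) (I J K : ℕ), 1 ≤ I → 1 ≤ J → 1 ≤ K →
      |Spi a s I J K - EPi a s I J K| ≤
        C / (a ^ 2 + min (min ((I : ℝ) ^ 2) ((J : ℝ) ^ 2)) ((K : ℝ) ^ 2)) ^ s :=
  abs_Spi_sub_EPi_le_general s hs0
end

section
/- Let 0 < s < 1 and let x ∈ ℝ³ with x ∉ 2πℤ³. Then the regularized periodization of the power kernel converges by expanding rectangles: there exists L ∈ ℝ such that for every ε > 0 there is N₀ ∈ ℕ with | L - ∑_{(n,k,l) ∈ Π_{N,M,K} ∩ ℤ³, (n,k,l) ≠ (0,0,0)} ( |x - 2π(n,k,l)|^{2s-3} - |2π(n,k,l)|^{2s-3} ) | < ε whenever N, M, K ≥ N₀, where Π_{N,M,K} = [-N,N] × [-M,M] × [-K,K]. -/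
/-!
With `a = 2s - 3` the terms are of size `|p|^{a-1}`, so the series is not absolutely convergent
once `s ≥ 1/2`. Pairing the terms at `p` and `-p` removes the first-order part: their sum
`|2πp - x|^a + |2πp + x|^a - 2|2πp|^a` is a second difference of `|·|^a`, hence
`O(|x|² |p|^{a-2})`, and `a - 2 < -3` makes it summable over `ℤ³`. Rectangles are symmetric,
so their partial sums are half the partial sums of the paired series, which converge because
rectangles exhaust `ℤ³`.
-/

open Filter Topology Set
open scoped Real

lemma abs_rpow_sub_rpow_le {c m u v : ℝ} (hc : c ≤ 1) (hm : 0 < m) (hu : m ≤ u) (hv : m ≤ v) :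
    |v ^ c - u ^ c| ≤ |c| * m ^ (c - 1) * |v - u| := by
  have hderiv : ∀ w ∈ Ici m, HasDerivWithinAt (fun w : ℝ => w ^ c) (c * w ^ (c - 1)) (Ici m) w :=
    fun w hw => (Real.hasDerivAt_rpow_const (Or.inl (hm.trans_le hw).ne')).hasDerivWithinAt
  have hbound : ∀ w ∈ Ici m, ‖c * w ^ (c - 1)‖ ≤ |c| * m ^ (c - 1) := fun w hw => by
    rw [Real.norm_eq_abs, abs_mul, abs_of_pos (Real.rpow_pos_of_pos (hm.trans_le hw) _)]
    exact mul_le_mul_of_nonneg_left (Real.rpow_le_rpow_of_nonpos hm hw (by linarith))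
      (abs_nonneg c)
  exact Convex.norm_image_sub_le_of_norm_hasDerivWithin_le hderiv hbound (convex_Ici m) hu hv

lemma abs_rpow_sub_rpow_sub_mul_le {b m u v : ℝ} (hb : b ≤ 2) (hm : 0 < m) (hu : m ≤ u)
    (hv : m ≤ v) :
    |v ^ b - u ^ b - b * u ^ (b - 1) * (v - u)| ≤ |b| * |b - 1| * m ^ (b - 2) * (v - u) ^ 2 := by
  have hm_le : ∀ w ∈ uIcc u v, m ≤ w := fun w hw => (le_min hu hv).trans hw.1
  have hderiv : ∀ w ∈ uIcc u v, HasDerivWithinAt (fun w : ℝ => w ^ b - b * u ^ (b - 1) * w)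
      (b * w ^ (b - 1) - b * u ^ (b - 1)) (uIcc u v) w := fun w hw =>
    ((Real.hasDerivAt_rpow_const (Or.inl (hm.trans_le (hm_le w hw)).ne')).sub
      ((hasDerivAt_id w).const_mul _ |>.congr_deriv (mul_one _))).hasDerivWithinAt
  have hbound : ∀ w ∈ uIcc u v, ‖b * w ^ (b - 1) - b * u ^ (b - 1)‖ ≤
      |b| * |b - 1| * m ^ (b - 2) * |v - u| := fun w hw => by
    rw [Real.norm_eq_abs, ← mul_sub, abs_mul, mul_assoc, mul_assoc]
    refine mul_le_mul_of_nonneg_left ?_ (abs_nonneg b)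
    calc |w ^ (b - 1) - u ^ (b - 1)| ≤ |b - 1| * m ^ (b - 1 - 1) * |w - u| :=
          abs_rpow_sub_rpow_le (by linarith) hm hu (hm_le w hw)
      _ ≤ |b - 1| * (m ^ (b - 2) * |v - u|) := by
          rw [show b - 1 - 1 = b - 2 by ring, mul_assoc]
          have hwu := abs_sub_left_of_mem_uIcc hw
          gcongr
  have hmvt := Convex.norm_image_sub_le_of_norm_hasDerivWithin_le hderiv hbound
    (convex_uIcc u v) left_mem_uIcc right_mem_uIcc
  rw [Real.norm_eq_abs, Real.norm_eq_abs] at hmvt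
  calc |v ^ b - u ^ b - b * u ^ (b - 1) * (v - u)|
      = |v ^ b - b * u ^ (b - 1) * v - (u ^ b - b * u ^ (b - 1) * u)| := by ring_nf
    _ ≤ |b| * |b - 1| * m ^ (b - 2) * |v - u| * |v - u| := hmvt
    _ = |b| * |b - 1| * m ^ (b - 2) * (v - u) ^ 2 := by rw [mul_assoc, ← sq, sq_abs]

lemma abs_rpow_add_rpow_sub_two_mul_rpow_le {b m u v₁ v₂ : ℝ} (hb : b ≤ 2) (hm : 0 < m)
    (hu : m ≤ u) (hv₁ : m ≤ v₁) (hv₂ : m ≤ v₂) :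
    |v₁ ^ b + v₂ ^ b - 2 * u ^ b| ≤
      |b| * |b - 1| * m ^ (b - 2) * ((v₁ - u) ^ 2 + (v₂ - u) ^ 2) +
        |b| * u ^ (b - 1) * |v₁ + v₂ - 2 * u| := by
  have hlin : |b * u ^ (b - 1) * (v₁ + v₂ - 2 * u)| = |b| * u ^ (b - 1) * |v₁ + v₂ - 2 * u| := by
    rw [abs_mul, abs_mul, abs_of_pos (Real.rpow_pos_of_pos (hm.trans_le hu) _)]
  calc |v₁ ^ b + v₂ ^ b - 2 * u ^ b|
      = |(v₁ ^ b - u ^ b - b * u ^ (b - 1) * (v₁ - u)) +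
          (v₂ ^ b - u ^ b - b * u ^ (b - 1) * (v₂ - u)) +
          b * u ^ (b - 1) * (v₁ + v₂ - 2 * u)| := by ring_nf
    _ ≤ _ := abs_add_three _ _ _
    _ ≤ _ := by
      rw [hlin, mul_add]
      gcongr ?_ + ?_ + _ <;> exact abs_rpow_sub_rpow_sub_mul_le hb hm hu ‹_›

lemma eventually_cofinite_le_norm {α : Type*} [SeminormedAddGroup α] [ProperSpace α]
    [DiscreteTopology α] (R : ℝ) : ∀ᶠ p : α in cofinite, R ≤ ‖p‖ :=
  (cocompact_eq_cofinite α ▸ tendsto_norm_cocompact_atTop).eventually_ge_atTop R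

lemma summable_norm_rpow_int_triple {r : ℝ} (hr : r < -3) :
    Summable fun p : ℤ × ℤ × ℤ => ‖p‖ ^ r := by
  have hint : Summable fun n : ℤ => max 1 ‖n‖ ^ (r / 3) := by
    refine (Real.summable_abs_int_rpow (b := -(r / 3)) (by linarith)).congr_cofinite ?_
    filter_upwards [eventually_cofinite_ne 0] with n hn
    rw [neg_neg, Int.norm_eq_abs, max_eq_right (by exact_mod_cast Int.one_le_abs hn)]
  have hnonneg : ∀ n : ℤ, 0 ≤ max 1 ‖n‖ ^ (r / 3) := fun n => by positivity
  refine (hint.mul_of_nonneg (hint.mul_of_nonneg hint hnonneg hnonneg) hnonneg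
    fun _ => by positivity).of_norm_bounded_eventually ?_
  filter_upwards [eventually_cofinite_le_norm 1] with p hp
  have hcoord : ∀ n : ℤ, ‖n‖ ≤ ‖p‖ → ‖p‖ ^ (r / 3) ≤ max 1 ‖n‖ ^ (r / 3) := fun n hn =>
    Real.rpow_le_rpow_of_nonpos (by positivity) (max_le hp hn) (by linarith)
  have hp0 : 0 < ‖p‖ := by linarith
  have hsplit : ‖p‖ ^ r = ‖p‖ ^ (r / 3) * (‖p‖ ^ (r / 3) * ‖p‖ ^ (r / 3)) := by
    rw [← Real.rpow_add hp0, ← Real.rpow_add hp0]; ring_nf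
  rw [Real.norm_of_nonneg (by positivity), hsplit]
  exact mul_le_mul (hcoord _ (norm_fst_le p))
    (mul_le_mul (hcoord _ ((norm_fst_le p.2).trans (norm_snd_le p)))
      (hcoord _ ((norm_snd_le p.2).trans (norm_snd_le p))) (by positivity) (hnonneg _))
    (by positivity) (hnonneg _)

lemma tendsto_sum_of_summable_add_neg {α β F : Type*} [InvolutiveNeg α]
    [NormedAddCommGroup F] [NormedSpace ℝ F] {f : α → F} (hf : Summable fun p => f p + f (-p))
    {l : Filter β} {s : β → Finset α} (hs : Tendsto s l atTop)
    (hs_neg : ∀ b, ∀ p ∈ s b, -p ∈ s b) :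
    Tendsto (fun b => ∑ p ∈ s b, f p) l (𝓝 ((2 : ℝ)⁻¹ • ∑' p, (f p + f (-p)))) := by
  have hhalf : ∀ b, ∑ p ∈ s b, f p = (2 : ℝ)⁻¹ • ∑ p ∈ s b, (f p + f (-p)) := fun b => by
    have hreflect : ∑ p ∈ s b, f (-p) = ∑ p ∈ s b, f p :=
      Finset.sum_nbij' Neg.neg Neg.neg (hs_neg b) (hs_neg b) (fun p _ => neg_neg p)
        (fun p _ => neg_neg p) (fun p _ => rfl)
    rw [Finset.sum_add_distrib, hreflect, ← two_smul ℝ, smul_smul, inv_mul_cancel₀ two_ne_zero,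
      one_smul]
  simp_rw [hhalf]
  exact (hf.hasSum.comp hs).const_smul _

noncomputable def latticeRectangle (n : ℕ × ℕ × ℕ) : Finset (ℤ × ℤ × ℤ) :=
  Finset.Icc (-(n.1 : ℤ)) n.1 ×ˢ Finset.Icc (-(n.2.1 : ℤ)) n.2.1 ×ˢ
    Finset.Icc (-(n.2.2 : ℤ)) n.2.2

lemma neg_mem_latticeRectangle {n : ℕ × ℕ × ℕ} {p : ℤ × ℤ × ℤ} (hp : p ∈ latticeRectangle n) :
    -p ∈ latticeRectangle n := by
  simp only [latticeRectangle, Finset.mem_product, Finset.mem_Icc, Prod.fst_neg,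
    Prod.snd_neg] at hp ⊢
  omega

lemma tendsto_latticeRectangle : Tendsto latticeRectangle atTop atTop := by
  refine tendsto_atTop_finset_of_monotone (fun n m hnm p hp => ?_)
    fun p => ⟨(p.1.natAbs, p.2.1.natAbs, p.2.2.natAbs), ?_⟩
  · obtain ⟨h₁, h₂, h₃⟩ : n.1 ≤ m.1 ∧ n.2.1 ≤ m.2.1 ∧ n.2.2 ≤ m.2.2 := hnm
    simp only [latticeRectangle, Finset.mem_product, Finset.mem_Icc] at hp ⊢
    omega
  · simp only [latticeRectangle, Finset.mem_product, Finset.mem_Icc]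
    omega

section InnerProductSpace

variable {E : Type*} [NormedAddCommGroup E] [InnerProductSpace ℝ E]

lemma exists_abs_norm_sub_rpow_add_norm_add_rpow_sub_le {a : ℝ} (ha : a ≤ 4) :
    ∃ C, 0 ≤ C ∧ ∀ x y : E, y ≠ 0 → 2 * ‖x‖ ≤ ‖y‖ →
      |‖y - x‖ ^ a + ‖y + x‖ ^ a - 2 * ‖y‖ ^ a| ≤ C * ‖x‖ ^ 2 * ‖y‖ ^ (a - 2) := by
  set b := a / 2 with hb_def
  have hb : b ≤ 2 := by linarith
  refine ⟨|b| * (9 * |b - 1| * 4 ^ (2 - b) + 2), by positivity, fun x y hy hxy => ?_⟩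
  have hpow : ∀ (z : E) (c : ℝ), ‖z‖ ^ (2 * c) = (‖z‖ ^ 2) ^ c := fun z c => by
    rw [← Real.rpow_natCast, ← Real.rpow_mul (norm_nonneg _), Nat.cast_ofNat]
  set u := ‖y‖ ^ 2
  have hu : 0 < u := by positivity
  have hm_le : ∀ z : E, ‖y‖ - ‖x‖ ≤ ‖z‖ → u / 4 ≤ ‖z‖ ^ 2 := fun z hz => by
    nlinarith [norm_nonneg x]
  have hsub : ‖y - x‖ ^ 2 = u - 2 * inner ℝ y x + ‖x‖ ^ 2 := norm_sub_sq_real y x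
  have hadd : ‖y + x‖ ^ 2 = u + 2 * inner ℝ y x + ‖x‖ ^ 2 := norm_add_sq_real y x
  have hinner := abs_real_inner_le_norm y x
  have hdev : (‖y - x‖ ^ 2 - u) ^ 2 + (‖y + x‖ ^ 2 - u) ^ 2 ≤ 9 * ‖x‖ ^ 2 * u := by
    have hinner_sq : inner ℝ y x ^ 2 ≤ u * ‖x‖ ^ 2 := by
      rw [← sq_abs, ← mul_pow]; exact pow_le_pow_left₀ (abs_nonneg _) hinner 2
    have hx : ‖x‖ ^ 2 ≤ u / 4 := by nlinarith [norm_nonneg x]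
    rw [hsub, hadd]
    nlinarith [mul_le_mul_of_nonneg_left hx (sq_nonneg ‖x‖)]
  have hsum : |‖y - x‖ ^ 2 + ‖y + x‖ ^ 2 - 2 * u| = 2 * ‖x‖ ^ 2 := by
    rw [hsub, hadd, abs_of_nonneg (by ring_nf; positivity)]; ring
  have hscale : (u / 4) ^ (b - 2) * u = 4 ^ (2 - b) * u ^ (b - 1) := by
    rw [Real.div_rpow hu.le (by norm_num), div_mul_eq_mul_div, ← Real.rpow_add_one hu.ne',
      div_eq_mul_inv, ← Real.rpow_neg (by norm_num), neg_sub, mul_comm]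
    ring_nf
  have key := abs_rpow_add_rpow_sub_two_mul_rpow_le (m := u / 4) (u := u) hb (by positivity)
    (by linarith) (hm_le _ (norm_sub_norm_le y x)) (hm_le _ (norm_sub_le_norm_add y x))
  rw [hsum] at key
  have ha : a = 2 * b := by rw [hb_def]; ring
  rw [ha, hpow, hpow, hpow, show 2 * b - 2 = 2 * (b - 1) by ring, hpow]
  calc _ ≤ _ := key
    _ ≤ |b| * |b - 1| * (u / 4) ^ (b - 2) * (9 * ‖x‖ ^ 2 * u) +
          |b| * u ^ (b - 1) * (2 * ‖x‖ ^ 2) := by gcongr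
    _ = _ := by linear_combination (9 * |b| * |b - 1| * ‖x‖ ^ 2) * hscale

lemma summable_norm_sub_rpow_add_norm_add_rpow_sub {a : ℝ} (ha : a < -1) (x : E)
    {ι : ℤ × ℤ × ℤ → E} (hι : ∀ p, ‖p‖ ≤ ‖ι p‖) :
    Summable fun p => ‖ι p - x‖ ^ a + ‖ι p + x‖ ^ a - 2 * ‖ι p‖ ^ a := by
  obtain ⟨C, hC0, hC⟩ := exists_abs_norm_sub_rpow_add_norm_add_rpow_sub_le (E := E) (a := a)
    (by linarith)
  refine ((summable_norm_rpow_int_triple (r := a - 2) (by linarith)).mul_left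
    (C * ‖x‖ ^ 2)).of_norm_bounded_eventually ?_
  filter_upwards [eventually_cofinite_le_norm (2 * ‖x‖ + 1)] with p hp
  have hp0 : 0 < ‖p‖ := by linarith [norm_nonneg x]
  calc ‖‖ι p - x‖ ^ a + ‖ι p + x‖ ^ a - 2 * ‖ι p‖ ^ a‖
      ≤ C * ‖x‖ ^ 2 * ‖ι p‖ ^ (a - 2) :=
        hC x (ι p) (norm_pos_iff.1 (hp0.trans_le (hι p))) (by linarith [hι p])
    _ ≤ C * ‖x‖ ^ 2 * ‖p‖ ^ (a - 2) :=
        mul_le_mul_of_nonneg_left (Real.rpow_le_rpow_of_nonpos hp0 (hι p) (by linarith))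
          (by positivity)

lemma exists_tendsto_sum_latticeRectangle {a : ℝ} (ha : a < -1) (x : E) {ι : ℤ × ℤ × ℤ → E}
    (hι_neg : ∀ p, ι (-p) = -ι p) (hι : ∀ p, ‖p‖ ≤ ‖ι p‖) :
    ∃ L, Tendsto (fun n => ∑ p ∈ (latticeRectangle n).filter (· ≠ 0),
      (‖x - ι p‖ ^ a - ‖ι p‖ ^ a)) atTop (𝓝 L) := by
  set f : ℤ × ℤ × ℤ → ℝ := fun p => if p ≠ 0 then ‖x - ι p‖ ^ a - ‖ι p‖ ^ a else 0
  have hf : Summable fun p => f p + f (-p) := by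
    refine (summable_norm_sub_rpow_add_norm_add_rpow_sub ha x hι).congr_cofinite ?_
    filter_upwards [eventually_cofinite_ne 0] with p hp
    simp only [f, if_pos hp, if_pos (neg_ne_zero.2 hp), hι_neg, ← neg_add', norm_neg,
      norm_sub_rev x]
    ring
  simp_rw [Finset.sum_filter]
  exact ⟨_, tendsto_sum_of_summable_add_neg hf tendsto_latticeRectangle
    fun _ _ => neg_mem_latticeRectangle⟩

end InnerProductSpace

lemma norm_euclidean_three (a b c : ℝ) : ‖!₂[a, b, c]‖ = √(a ^ 2 + b ^ 2 + c ^ 2) := by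
  simp [EuclideanSpace.norm_eq, Fin.sum_univ_three]

noncomputable def latticePoint (p : ℤ × ℤ × ℤ) : EuclideanSpace ℝ (Fin 3) :=
  !₂[2 * π * p.1, 2 * π * p.2.1, 2 * π * p.2.2]

lemma norm_latticePoint (p : ℤ × ℤ × ℤ) :
    ‖latticePoint p‖ = √((2 * π * p.1) ^ 2 + (2 * π * p.2.1) ^ 2 + (2 * π * p.2.2) ^ 2) :=
  norm_euclidean_three _ _ _

lemma norm_sub_latticePoint (x : ℝ × ℝ × ℝ) (p : ℤ × ℤ × ℤ) :
    ‖!₂[x.1, x.2.1, x.2.2] - latticePoint p‖ =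
      √((x.1 - 2 * π * p.1) ^ 2 + (x.2.1 - 2 * π * p.2.1) ^ 2 + (x.2.2 - 2 * π * p.2.2) ^ 2) := by
  rw [← norm_euclidean_three]
  congr 1
  ext i; fin_cases i <;> simp [latticePoint]

lemma latticePoint_neg (p : ℤ × ℤ × ℤ) : latticePoint (-p) = -latticePoint p := by
  ext i; fin_cases i <;> simp [latticePoint]

lemma norm_le_norm_latticePoint (p : ℤ × ℤ × ℤ) : ‖p‖ ≤ ‖latticePoint p‖ := by
  have hcoord : ∀ (n : ℤ) (i : Fin 3), latticePoint p i = 2 * π * n → ‖n‖ ≤ ‖latticePoint p‖ := by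
    intro n i hi
    refine le_trans ?_ (PiLp.norm_apply_le (latticePoint p) i)
    rw [hi, norm_mul, Int.norm_cast_real, Real.norm_of_nonneg (by positivity)]
    exact le_mul_of_one_le_left (norm_nonneg n) (by linarith [Real.pi_gt_three])
  simp only [Prod.norm_def]
  exact max_le (hcoord _ 0 rfl) (max_le (hcoord _ 1 rfl) (hcoord _ 2 rfl))

theorem regularized_periodization_converges_general (s : ℝ) (hs1 : s < 1)
    (x : ℝ × ℝ × ℝ) :
    ∃ L : ℝ, ∀ ε > (0 : ℝ), ∃ N₀ : ℕ, ∀ N M K : ℕ, N₀ ≤ N → N₀ ≤ M → N₀ ≤ K →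
      |L - ∑ p ∈ ((Finset.Icc (-(N : ℤ)) (N : ℤ)) ×ˢ (Finset.Icc (-(M : ℤ)) (M : ℤ)) ×ˢ
          (Finset.Icc (-(K : ℤ)) (K : ℤ))).filter (fun p : ℤ × ℤ × ℤ => p ≠ 0),
          (Real.sqrt ((x.1 - 2 * π * p.1) ^ 2 + (x.2.1 - 2 * π * p.2.1) ^ 2 +
              (x.2.2 - 2 * π * p.2.2) ^ 2) ^ (2 * s - 3) -
            Real.sqrt ((2 * π * p.1) ^ 2 + (2 * π * p.2.1) ^ 2 +
              (2 * π * p.2.2) ^ 2) ^ (2 * s - 3))| < ε := by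
  obtain ⟨L, hL⟩ := exists_tendsto_sum_latticeRectangle (a := 2 * s - 3) (by linarith)
    !₂[x.1, x.2.1, x.2.2] latticePoint_neg norm_le_norm_latticePoint
  refine ⟨L, fun ε hε => ?_⟩
  obtain ⟨n, hn⟩ := Metric.tendsto_atTop.1 hL ε hε
  obtain ⟨n₁, n₂, n₃⟩ := n
  refine ⟨max n₁ (max n₂ n₃), fun N M K hN hM hK => ?_⟩
  have h := hn (N, M, K) (Prod.mk_le_mk.2 ⟨by omega, Prod.mk_le_mk.2 ⟨by omega, by omega⟩⟩)
  rw [Real.dist_eq, abs_sub_comm, latticeRectangle] at h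
  simpa only [norm_sub_latticePoint, norm_latticePoint] using h

/-- For `0 < s < 1` and `x ∈ ℝ³ \ 2πℤ³`, the regularized periodization of the power kernel
`|y|^{2s-3}` converges by expanding rectangles: there is `L ∈ ℝ` such that for every `ε > 0`
there is `N₀` with
`|L - ∑_{(n,k,l) ∈ Π_{N,M,K} ∩ ℤ³, (n,k,l) ≠ 0} (|x - 2π(n,k,l)|^{2s-3} - |2π(n,k,l)|^{2s-3})| < ε`
whenever `N, M, K ≥ N₀`, where `Π_{N,M,K} = [-N,N] × [-M,M] × [-K,K]`. -/
theorem regularized_periodization_converges (s : ℝ) (hs0 : 0 < s) (hs1 : s < 1)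
    (x : ℝ × ℝ × ℝ)
    (hx : ∀ p : ℤ × ℤ × ℤ, x ≠ (2 * π * p.1, 2 * π * p.2.1, 2 * π * p.2.2)) :
    ∃ L : ℝ, ∀ ε > (0 : ℝ), ∃ N₀ : ℕ, ∀ N M K : ℕ, N₀ ≤ N → N₀ ≤ M → N₀ ≤ K →
      |L - ∑ p ∈ ((Finset.Icc (-(N : ℤ)) (N : ℤ)) ×ˢ (Finset.Icc (-(M : ℤ)) (M : ℤ)) ×ˢ
          (Finset.Icc (-(K : ℤ)) (K : ℤ))).filter (fun p : ℤ × ℤ × ℤ => p ≠ 0),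
          (Real.sqrt ((x.1 - 2 * π * p.1) ^ 2 + (x.2.1 - 2 * π * p.2.1) ^ 2 +
              (x.2.2 - 2 * π * p.2.2) ^ 2) ^ (2 * s - 3) -
            Real.sqrt ((2 * π * p.1) ^ 2 + (2 * π * p.2.1) ^ 2 +
              (2 * π * p.2.2) ^ 2) ^ (2 * s - 3))| < ε :=
  regularized_periodization_converges_general s hs1 x
end
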